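/- arXiv:1904.02368 — 2 statements merged into one kernel-verified Lean document; each statement's English description precedes it below -/
import Mathlib

section
/- Let Γ = [1/2; r_1, r_2; α] be a blockchain oceanic game with two major miners, where r_1, r_2 ≥ 0, α > 0, r_1 + r_2 + α = 1, r_1 ≤ 1/2, r_2 ≤ 1/2 and α ≤ 1/2 (region Δ_2, the balance-of-power region in which no single entity holds a majority). Then the value of miner 1 is φ_1 = ((1 − 2·r_2)/(2·α))². -/
open MeasureTheory Finset

/-- The uniform probability measure on the unit cube `[0,1]^m`. -/
noncomputable def cubeMeasure (m : ℕ) : Measure (Fin m → ℝ) :=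
  Measure.pi fun _ => volume.restrict (Set.Icc (0:ℝ) 1)

/-- The event that miner `i` is pivotal: with `r(x) = ∑_j r_j · 1{X_j < X_i}`,
`r(X_i) + α·X_i < q ≤ r(X_i) + α·X_i + r_i`. -/
def pivotEvent (m : ℕ) (q α : ℝ) (r : Fin m → ℝ) (i : Fin m) : Set (Fin m → ℝ) :=
  {x | (∑ j, if x j < x i then r j else 0) + α * x i < q ∧
       q ≤ (∑ j, if x j < x i then r j else 0) + α * x i + r i}

/-- The value `φ_i` of major miner `i` in the blockchain oceanic game
`Γ = [q; r_1,…,r_m; α]`. -/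
noncomputable def minerValue (m : ℕ) (q α : ℝ) (r : Fin m → ℝ) (i : Fin m) : ℝ :=
  (cubeMeasure m (pivotEvent m q α r i)).toReal

/-- The oceanic value `Φ = 1 - ∑_i φ_i`. -/
noncomputable def oceanicValue (m : ℕ) (q α : ℝ) (r : Fin m → ℝ) : ℝ :=
  1 - ∑ i, minerValue m q α r i

/-! Condition on miner 1's draw `x = X₁`. If `X₂ < x` (probability `x`), miner 1 is pivotal iff
`r₂ + α x < 1/2`, i.e. `x < b := (1 - 2 r₂) / (2 α)`; if `X₂ ≥ x` (probability `1 - x`), iff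
`α x + r₁ ≥ 1/2`, i.e. `x ≥ 1 - b`. In Δ₂ the other two inequalities hold automatically since
`α ≤ 1/2`, so `φ₁ = ∫₀ᵇ x dx + ∫_{1-b}^1 (1 - x) dx = b²/2 + b²/2`. -/

open Set

lemma volume_restrict_Icc_zero_one_Iio {x : ℝ} (hx : x ≤ 1) :
    volume.restrict (Icc (0 : ℝ) 1) (Iio x) = ENNReal.ofReal x := by
  have : Iio x ∩ Icc 0 1 = Ico 0 x := by
    ext y; simp only [mem_inter_iff, Set.mem_Iio, Set.mem_Icc, Set.mem_Ico]; grind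
  rw [Measure.restrict_apply measurableSet_Iio, this, Real.volume_Ico, sub_zero]

lemma volume_restrict_Icc_zero_one_Ici {x : ℝ} (hx : 0 ≤ x) :
    volume.restrict (Icc (0 : ℝ) 1) (Ici x) = ENNReal.ofReal (1 - x) := by
  have : Ici x ∩ Icc 0 1 = Icc x 1 := by
    ext y; simp only [mem_inter_iff, Set.mem_Ici, Set.mem_Icc]; grind
  rw [Measure.restrict_apply measurableSet_Ici, this, Real.volume_Icc]

lemma lintegral_Icc_ofReal_sub_left {a b : ℝ} (hab : a ≤ b) :
    ∫⁻ x in Icc a b, ENNReal.ofReal (x - a) = ENNReal.ofReal ((b - a) ^ 2 / 2) := by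
  have hint : IntegrableOn (fun x => x - a) (Icc a b) :=
    (continuous_id.sub continuous_const).integrableOn_Icc
  rw [← ofReal_integral_eq_lintegral_ofReal hint
      ((ae_restrict_iff' measurableSet_Icc).2 (ae_of_all _ fun x hx => sub_nonneg.2 hx.1)),
    integral_Icc_eq_integral_Ioc, ← intervalIntegral.integral_of_le hab,
    intervalIntegral.integral_comp_sub_right (fun x => x), integral_id]
  ring_nf

lemma lintegral_Icc_ofReal_sub_right {a b : ℝ} (hab : a ≤ b) :
    ∫⁻ x in Icc a b, ENNReal.ofReal (b - x) = ENNReal.ofReal ((b - a) ^ 2 / 2) := by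
  have hint : IntegrableOn (fun x => b - x) (Icc a b) :=
    (continuous_const.sub continuous_id).integrableOn_Icc
  rw [← ofReal_integral_eq_lintegral_ofReal hint
      ((ae_restrict_iff' measurableSet_Icc).2 (ae_of_all _ fun x hx => sub_nonneg.2 hx.2)),
    integral_Icc_eq_integral_Ioc, ← intervalIntegral.integral_of_le hab,
    intervalIntegral.integral_comp_sub_left (fun x => x), integral_id]
  ring_nf

lemma cubeMeasure_two_preimage_piFinTwo {S : Set (ℝ × ℝ)} (hS : MeasurableSet S) :
    cubeMeasure 2 ((MeasurableEquiv.piFinTwo fun _ => ℝ) ⁻¹' S)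
      = ∫⁻ x in Icc 0 1, volume.restrict (Icc (0 : ℝ) 1) (Prod.mk x ⁻¹' S) := by
  rw [cubeMeasure, (measurePreserving_piFinTwo fun _ => _).measure_preimage
    hS.nullMeasurableSet, Measure.prod_apply hS]

def pivotEventTwo (q α r₁ r₂ : ℝ) : Set (ℝ × ℝ) :=
  {p | (if p.2 < p.1 then r₂ else 0) + α * p.1 < q ∧
       q ≤ (if p.2 < p.1 then r₂ else 0) + α * p.1 + r₁}

lemma measurableSet_pivotEventTwo (q α r₁ r₂ : ℝ) :
    MeasurableSet (pivotEventTwo q α r₁ r₂) := by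
  have hf : Measurable fun p : ℝ × ℝ => (if p.2 < p.1 then r₂ else 0) + α * p.1 :=
    (Measurable.ite (measurableSet_lt measurable_snd measurable_fst) measurable_const
      measurable_const).add (measurable_const.mul measurable_fst)
  exact (hf measurableSet_Iio).inter ((hf.add_const r₁) measurableSet_Ici)

lemma pivotEvent_two_zero (q α r₁ r₂ : ℝ) :
    pivotEvent 2 q α ![r₁, r₂] 0
      = (MeasurableEquiv.piFinTwo fun _ => ℝ) ⁻¹' pivotEventTwo q α r₁ r₂ := by
  ext x
  simp [pivotEvent, pivotEventTwo, Fin.sum_univ_two]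

lemma preimage_mk_pivotEventTwo (q α r₁ r₂ x : ℝ) :
    Prod.mk x ⁻¹' pivotEventTwo q α r₁ r₂
      = {y | y < x ∧ r₂ + α * x < q ∧ q ≤ r₂ + α * x + r₁}
        ∪ {y | x ≤ y ∧ α * x < q ∧ q ≤ α * x + r₁} := by
  ext y
  by_cases hy : y < x <;> simp [pivotEventTwo, hy, le_of_not_gt]

lemma volume_restrict_Icc_zero_one_preimage_mk_pivotEventTwo (q α r₁ r₂ : ℝ) {x : ℝ}
    (hx : x ∈ Icc (0 : ℝ) 1) :
    volume.restrict (Icc (0 : ℝ) 1) (Prod.mk x ⁻¹' pivotEventTwo q α r₁ r₂)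
      = (if r₂ + α * x < q ∧ q ≤ r₂ + α * x + r₁ then ENNReal.ofReal x else 0)
        + (if α * x < q ∧ q ≤ α * x + r₁ then ENNReal.ofReal (1 - x) else 0) := by
  have hdisj : Disjoint {y | y < x ∧ r₂ + α * x < q ∧ q ≤ r₂ + α * x + r₁}
      {y | x ≤ y ∧ α * x < q ∧ q ≤ α * x + r₁} :=
    disjoint_left.2 fun y h h' => (not_le.2 h.1) h'.1
  rw [preimage_mk_pivotEventTwo, measure_union hdisj
    (measurableSet_Ici.inter (MeasurableSet.const _))]
  congr 1
  · split_ifs with h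
    · simpa only [h, and_true, Iio_def] using volume_restrict_Icc_zero_one_Iio hx.2
    · simp only [h, and_false, ofPred_false, measure_empty]
  · split_ifs with h
    · simpa only [h, and_true, Ici_def] using volume_restrict_Icc_zero_one_Ici hx.1
    · simp only [h, and_false, ofPred_false, measure_empty]

lemma lintegral_Icc_zero_one_indicator_Ico_add_indicator_Ico {b : ℝ} (hb₀ : 0 ≤ b)
    (hb₁ : b ≤ 1) :
    ∫⁻ x in Icc 0 1, ((Ico 0 b).indicator ENNReal.ofReal x
        + (Ico (1 - b) 1).indicator (fun t => ENNReal.ofReal (1 - t)) x)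
      = ENNReal.ofReal (b ^ 2) := by
  have hlow : ∫⁻ x in Ico 0 b, ENNReal.ofReal x = ENNReal.ofReal (b ^ 2 / 2) := by
    rw [setLIntegral_congr Ico_ae_eq_Icc]
    simpa using lintegral_Icc_ofReal_sub_left hb₀
  have hhigh : ∫⁻ x in Ico (1 - b) 1, ENNReal.ofReal (1 - x) = ENNReal.ofReal (b ^ 2 / 2) := by
    rw [setLIntegral_congr Ico_ae_eq_Icc, lintegral_Icc_ofReal_sub_right (by linarith)]
    ring_nf
  rw [lintegral_add_left (ENNReal.measurable_ofReal.indicator measurableSet_Ico),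
    lintegral_indicator measurableSet_Ico, lintegral_indicator measurableSet_Ico,
    Measure.restrict_restrict measurableSet_Ico, Measure.restrict_restrict measurableSet_Ico,
    Set.inter_eq_left.2 (Set.Ico_subset_Icc_self.trans (Set.Icc_subset_Icc le_rfl hb₁)),
    Set.inter_eq_left.2
      (Set.Ico_subset_Icc_self.trans (Set.Icc_subset_Icc (by linarith) le_rfl)),
    hlow, hhigh, ← ENNReal.ofReal_add (by positivity) (by positivity), add_halves]

lemma pivotal_before_iff {α r₁ r₂ x : ℝ} (hα : 0 < α) (htot : r₁ + r₂ + α = 1)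
    (h₃ : α ≤ 1 / 2) (hx : 0 ≤ x) :
    r₂ + α * x < 1 / 2 ∧ 1 / 2 ≤ r₂ + α * x + r₁ ↔ x < (1 - 2 * r₂) / (2 * α) := by
  rw [lt_div_iff₀ (by positivity : (0 : ℝ) < 2 * α)]
  constructor
  · rintro ⟨h, -⟩; linarith
  · intro h; constructor <;> nlinarith

lemma pivotal_after_iff {α r₁ r₂ x : ℝ} (hα : 0 < α) (htot : r₁ + r₂ + α = 1)
    (h₃ : α ≤ 1 / 2) (hx : x < 1) :
    α * x < 1 / 2 ∧ 1 / 2 ≤ α * x + r₁ ↔ 1 - (1 - 2 * r₂) / (2 * α) ≤ x := by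
  rw [sub_le_comm, le_div_iff₀ (by positivity : (0 : ℝ) < 2 * α)]
  constructor
  · rintro ⟨-, h⟩; linarith
  · intro h; constructor <;> nlinarith

theorem stmt_6_general (α r₁ r₂ : ℝ) (hα : 0 < α)
    (htot : r₁ + r₂ + α = 1) (h₁ : r₁ ≤ 1 / 2) (h₂ : r₂ ≤ 1 / 2) (h₃ : α ≤ 1 / 2) :
    minerValue 2 (1 / 2) α ![r₁, r₂] 0 = ((1 - 2 * r₂) / (2 * α)) ^ 2 := by
  set b := (1 - 2 * r₂) / (2 * α) with hb
  have hb₀ : 0 ≤ b := div_nonneg (by linarith) (by linarith)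
  have hb₁ : b ≤ 1 := by rw [div_le_one (by positivity)]; linarith
  have hslice : ∀ x ∈ Icc (0 : ℝ) 1,
      volume.restrict (Icc (0 : ℝ) 1) (Prod.mk x ⁻¹' pivotEventTwo (1 / 2) α r₁ r₂)
        = (Ico 0 b).indicator ENNReal.ofReal x
          + (Ico (1 - b) 1).indicator (fun t => ENNReal.ofReal (1 - t)) x := by
    intro x hx
    rw [volume_restrict_Icc_zero_one_preimage_mk_pivotEventTwo _ _ _ _ hx]
    congr 1
    · simp only [pivotal_before_iff hα htot h₃ hx.1, indicator, Set.mem_Ico, hx.1, true_and,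
        ← hb]
    · rcases hx.2.lt_or_eq with hx₁ | rfl
      · simp only [pivotal_after_iff hα htot h₃ hx₁, indicator, Set.mem_Ico, hx₁, and_true,
          ← hb]
      -- at `x = 1` both sides vanish, whether or not `α * 1 < 1 / 2`
      · simp
  rw [minerValue, pivotEvent_two_zero, cubeMeasure_two_preimage_piFinTwo
    (measurableSet_pivotEventTwo _ _ _ _), setLIntegral_congr_fun measurableSet_Icc hslice,
    lintegral_Icc_zero_one_indicator_Ico_add_indicator_Ico hb₀ hb₁,
    ENNReal.toReal_ofReal (sq_nonneg b)]

theorem stmt_6 (α r₁ r₂ : ℝ) (hr₁ : 0 ≤ r₁) (hr₂ : 0 ≤ r₂) (hα : 0 < α)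
    (htot : r₁ + r₂ + α = 1) (h₁ : r₁ ≤ 1 / 2) (h₂ : r₂ ≤ 1 / 2) (h₃ : α ≤ 1 / 2) :
    minerValue 2 (1 / 2) α ![r₁, r₂] 0 = ((1 - 2 * r₂) / (2 * α)) ^ 2 :=
  stmt_6_general α r₁ r₂ hα htot h₁ h₂ h₃
end

section
/- (Consistency of the entry theorem at m = 1.) Let Γ = [1/2; r_1; α] be a blockchain oceanic game with one major miner, where 0 ≤ r_1 < 1/2 ≤ α, and let Γ⁺ = [1/2; r_1, r_2; α] be obtained by adding a second major miner with weight r_2 > 0 such that r_1 + r_2 ≤ 1/2. Then the value of the entering miner in Γ⁺ satisfies φ⁺_2 = r_2·(α − r_1)/α², and consequently its value per unit of resource equals the oceanic value per unit of resource of the original game: φ⁺_2/r_2 = (α − r_1)/α² = Φ/α, where Φ = (α − r_1)/α is the oceanic value in Γ. -/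
open MeasureTheory Finset

/-
Only the order of arrival matters. Writing `(x, y) = (X₁, X₂)`, miner 2 is pivotal exactly when
either `x < y` and `y ∈ [a₁, a₂) = [(q - r₁ - r₂) / α, (q - r₁) / α)`, or `y ≤ x` and
`y ∈ [b₁, b₂) = [(q - r₂) / α, q / α)`. The sections at height `y` are `[0, y)` and `[y, 1]`, so
`φ₂ = ∫_{a₁}^{a₂} y dy + ∫_{b₁}^{b₂} (1 - y) dy`. Both intervals have length `r₂ / α` and the
second is the first shifted by `r₁ / α`, so this is `r₂ / α - r₁ r₂ / α²`, whatever the quota `q`.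
-/

lemma MeasureTheory.Measure.prod_inter_preimage_snd {α β : Type*} [MeasurableSpace α]
    [MeasurableSpace β] (μ : Measure α) (ν : Measure β) [SFinite μ] [SFinite ν] {S : Set (α × β)}
    (hS : MeasurableSet S) {s : Set β} (hs : MeasurableSet s) :
    μ.prod ν (S ∩ Prod.snd ⁻¹' s) = ∫⁻ y in s, μ ((fun x => (x, y)) ⁻¹' S) ∂ν := by
  rw [← Set.univ_prod, ← Measure.restrict_apply' (MeasurableSet.univ.prod hs),
    ← Measure.prod_restrict, Measure.restrict_univ, Measure.prod_apply_symm hS]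

lemma setLIntegral_Ico_ofReal {f : ℝ → ℝ} {a b : ℝ} (hab : a ≤ b)
    (hf : ContinuousOn f (Set.Icc a b)) (hf₀ : ∀ y ∈ Set.Ico a b, 0 ≤ f y) :
    ∫⁻ y in Set.Ico a b, ENNReal.ofReal (f y) = ENNReal.ofReal (∫ y in a..b, f y) := by
  rw [intervalIntegral.integral_of_le hab, ← setIntegral_congr_set Ico_ae_eq_Ioc,
    ofReal_integral_eq_lintegral_ofReal]
  · exact (hf.integrableOn_Icc).mono_set Set.Ico_subset_Icc_self
  · exact (ae_restrict_iff' measurableSet_Ico).mpr (ae_of_all _ hf₀)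

lemma Ico_subset_Icc_zero_one {a b : ℝ} (ha : 0 ≤ a) (hb : b ≤ 1) : Set.Ico a b ⊆ Set.Icc 0 1 :=
  fun _ hy => ⟨ha.trans hy.1, hy.2.le.trans hb⟩

lemma and_lt_le_add_iff_mem_Ico {α : ℝ} (hα : 0 < α) (s y q r : ℝ) :
    (s + α * y < q ∧ q ≤ s + α * y + r) ↔ y ∈ Set.Ico ((q - s - r) / α) ((q - s) / α) := by
  rw [Set.mem_Ico, div_le_iff₀ hα, lt_div_iff₀ hα]
  constructor <;> rintro ⟨h₁, h₂⟩ <;> constructor <;> linarith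

local notation "𝕌" => volume.restrict (Set.Icc (0:ℝ) 1)

lemma uniform_Iio {y : ℝ} (hy : y ∈ Set.Icc (0:ℝ) 1) : 𝕌 (Set.Iio y) = ENNReal.ofReal y := by
  have : Set.Iio y ∩ Set.Icc 0 1 = Set.Ico 0 y := by
    ext z; simp only [Set.mem_inter_iff, Set.mem_Iio, Set.mem_Icc, Set.mem_Ico]
    grind [hy.2]
  rw [Measure.restrict_apply measurableSet_Iio, this, Real.volume_Ico, sub_zero]

lemma uniform_Ici {y : ℝ} (hy : y ∈ Set.Icc (0:ℝ) 1) : 𝕌 (Set.Ici y) = ENNReal.ofReal (1 - y) := by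
  have : Set.Ici y ∩ Set.Icc 0 1 = Set.Icc y 1 := by
    ext z; simp only [Set.mem_inter_iff, Set.mem_Ici, Set.mem_Icc]
    grind [hy.1]
  rw [Measure.restrict_apply measurableSet_Ici, this, Real.volume_Icc]

lemma uniform_prod_lt_inter_snd_Ico {a b : ℝ} (ha : 0 ≤ a) (hab : a ≤ b) (hb : b ≤ 1) :
    Measure.prod 𝕌 𝕌 ({p | p.1 < p.2} ∩ Prod.snd ⁻¹' Set.Ico a b) =
      ENNReal.ofReal ((b ^ 2 - a ^ 2) / 2) := by
  rw [Measure.prod_inter_preimage_snd _ _ (measurableSet_lt measurable_fst measurable_snd)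
    measurableSet_Ico, Measure.restrict_restrict_of_subset (Ico_subset_Icc_zero_one ha hb),
    ← integral_id, ← setLIntegral_Ico_ofReal (f := fun y => y) hab continuous_id'.continuousOn
      fun y hy => ha.trans hy.1]
  exact setLIntegral_congr_fun measurableSet_Ico fun y hy =>
    uniform_Iio (Ico_subset_Icc_zero_one ha hb hy)

lemma uniform_prod_le_inter_snd_Ico {a b : ℝ} (ha : 0 ≤ a) (hab : a ≤ b) (hb : b ≤ 1) :
    Measure.prod 𝕌 𝕌 ({p | p.2 ≤ p.1} ∩ Prod.snd ⁻¹' Set.Ico a b) =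
      ENNReal.ofReal ((b - a) - (b ^ 2 - a ^ 2) / 2) := by
  have hint : ∫ y in a..b, (1 - y) = (b - a) - (b ^ 2 - a ^ 2) / 2 := by
    rw [intervalIntegral.integral_sub intervalIntegrable_const
      intervalIntegral.intervalIntegrable_id, integral_id, intervalIntegral.integral_const,
      smul_eq_mul, mul_one]
  rw [Measure.prod_inter_preimage_snd _ _ (measurableSet_le measurable_snd measurable_fst)
    measurableSet_Ico, Measure.restrict_restrict_of_subset (Ico_subset_Icc_zero_one ha hb),
    ← hint, ← setLIntegral_Ico_ofReal hab (by fun_prop) fun y hy => by linarith [hy.2]]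
  exact setLIntegral_congr_fun measurableSet_Ico fun y hy =>
    uniform_Ici (Ico_subset_Icc_zero_one ha hb hy)

lemma cubeMeasure_one_preimage_funUnique (s : Set ℝ) :
    cubeMeasure 1 (MeasurableEquiv.funUnique (Fin 1) ℝ ⁻¹' s) = 𝕌 s :=
  (measurePreserving_funUnique _ _).measure_preimage_equiv s

lemma cubeMeasure_two_preimage_finTwoArrow (s : Set (ℝ × ℝ)) :
    cubeMeasure 2 (MeasurableEquiv.finTwoArrow ⁻¹' s) = Measure.prod 𝕌 𝕌 s :=
  (measurePreserving_finTwoArrow _).measure_preimage_equiv s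

lemma pivotEvent_one {q α : ℝ} (hα : 0 < α) (r : ℝ) :
    pivotEvent 1 q α (fun _ => r) 0 =
      MeasurableEquiv.funUnique (Fin 1) ℝ ⁻¹' Set.Ico ((q - r) / α) (q / α) := by
  ext x
  simpa [pivotEvent] using and_lt_le_add_iff_mem_Ico hα 0 (x 0) q r

lemma pivotEvent_two_one {q α : ℝ} (hα : 0 < α) (r₁ r₂ : ℝ) :
    pivotEvent 2 q α ![r₁, r₂] 1 = MeasurableEquiv.finTwoArrow ⁻¹'
      ({p | p.1 < p.2} ∩ Prod.snd ⁻¹' Set.Ico ((q - r₁ - r₂) / α) ((q - r₁) / α) ∪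
        {p | p.2 ≤ p.1} ∩ Prod.snd ⁻¹' Set.Ico ((q - r₂) / α) (q / α)) := by
  ext x
  by_cases h : x 0 < x 1
  · simpa [pivotEvent, h, not_le.2 h, add_comm] using
      and_lt_le_add_iff_mem_Ico hα r₁ (x 1) q r₂
  · simpa [pivotEvent, h, not_lt.1 h] using and_lt_le_add_iff_mem_Ico hα 0 (x 1) q r₂

lemma minerValue_one {q α r : ℝ} (hα : 0 < α) (hr : 0 ≤ r) (hrq : r ≤ q) (hqα : q ≤ α) :
    minerValue 1 q α (fun _ => r) 0 = r / α := by
  have hsub : Set.Ico ((q - r) / α) (q / α) ⊆ Set.Icc 0 1 :=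
    Ico_subset_Icc_zero_one (div_nonneg (by linarith) hα.le) (div_le_one_of_le₀ hqα hα.le)
  rw [minerValue, pivotEvent_one hα, cubeMeasure_one_preimage_funUnique,
    Measure.restrict_eq_self _ hsub, Real.volume_Ico, ENNReal.toReal_ofReal (by
      rw [← sub_div]; exact div_nonneg (by linarith) hα.le)]
  ring

lemma minerValue_two_one {q α r₁ r₂ : ℝ} (hα : 0 < α) (hr₁ : 0 ≤ r₁) (hr₂ : 0 ≤ r₂)
    (hq : r₁ + r₂ ≤ q) (hqα : q ≤ α) :
    minerValue 2 q α ![r₁, r₂] 1 = r₂ * (α - r₁) / α ^ 2 := by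
  set a₁ := (q - r₁ - r₂) / α
  set a₂ := (q - r₁) / α
  set b₁ := (q - r₂) / α
  set b₂ := q / α
  have ha₁ : 0 ≤ a₁ := div_nonneg (by linarith) hα.le
  have ha₁₂ : a₁ ≤ a₂ := div_le_div_of_nonneg_right (by linarith) hα.le
  have ha₂ : a₂ ≤ 1 := div_le_one_of_le₀ (by linarith) hα.le
  have hb₁ : 0 ≤ b₁ := div_nonneg (by linarith) hα.le
  have hb₁₂ : b₁ ≤ b₂ := div_le_div_of_nonneg_right (by linarith) hα.le
  have hb₂ : b₂ ≤ 1 := div_le_one_of_le₀ hqα hα.le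
  have hdisj : Disjoint ({p : ℝ × ℝ | p.1 < p.2} ∩ Prod.snd ⁻¹' Set.Ico a₁ a₂)
      ({p | p.2 ≤ p.1} ∩ Prod.snd ⁻¹' Set.Ico b₁ b₂) :=
    Set.disjoint_left.2 fun p h₁ h₂ => not_le.2 (show p.1 < p.2 from h₁.1) h₂.1
  rw [minerValue, pivotEvent_two_one hα, cubeMeasure_two_preimage_finTwoArrow,
    measure_union hdisj ((measurableSet_le measurable_snd measurable_fst).inter
      (measurable_snd measurableSet_Ico)),
    uniform_prod_lt_inter_snd_Ico ha₁ ha₁₂ ha₂, uniform_prod_le_inter_snd_Ico hb₁ hb₁₂ hb₂,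
    ENNReal.toReal_add ENNReal.ofReal_ne_top ENNReal.ofReal_ne_top,
    ENNReal.toReal_ofReal (by nlinarith), ENNReal.toReal_ofReal (by nlinarith)]
  simp only [a₁, a₂, b₁, b₂]
  field_simp
  ring

lemma oceanicValue_one {q α r : ℝ} (hα : 0 < α) (hr : 0 ≤ r) (hrq : r ≤ q) (hqα : q ≤ α) :
    oceanicValue 1 q α (fun _ => r) = (α - r) / α := by
  rw [oceanicValue, Fin.sum_univ_one, minerValue_one hα hr hrq hqα]
  field_simp

theorem stmt_11_general (α r₁ r₂ : ℝ) (hr₁ : 0 ≤ r₁) (hα : 1 / 2 ≤ α)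
    (hr₂ : 0 < r₂) (hsum : r₁ + r₂ ≤ 1 / 2) :
    minerValue 2 (1 / 2) α ![r₁, r₂] 1 = r₂ * (α - r₁) / α ^ 2 ∧
    minerValue 2 (1 / 2) α ![r₁, r₂] 1 / r₂ = (α - r₁) / α ^ 2 ∧
    oceanicValue 1 (1 / 2) α (fun _ => r₁) = (α - r₁) / α ∧
    minerValue 2 (1 / 2) α ![r₁, r₂] 1 / r₂ = oceanicValue 1 (1 / 2) α (fun _ => r₁) / α := by
  have hα₀ : 0 < α := by linarith
  have hφ := minerValue_two_one hα₀ hr₁ hr₂.le hsum hα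
  have hΦ := oceanicValue_one hα₀ hr₁ (by linarith) hα
  have hratio : minerValue 2 (1 / 2) α ![r₁, r₂] 1 / r₂ = (α - r₁) / α ^ 2 := by
    rw [hφ]
    field_simp
  refine ⟨hφ, hratio, hΦ, ?_⟩
  rw [hratio, hΦ]
  field_simp

/-- Consistency of the entry theorem at `m = 1`: adding a second miner of weight `r₂ > 0`
to `Γ = [1/2; r₁; α]` with `0 ≤ r₁ < 1/2 ≤ α` and `r₁ + r₂ ≤ 1/2` gives
`φ⁺₂ = r₂(α - r₁)/α²`, hence `φ⁺₂/r₂ = (α - r₁)/α² = Φ/α` with `Φ = (α - r₁)/α`. -/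
theorem stmt_11 (α r₁ r₂ : ℝ) (hr₁ : 0 ≤ r₁) (hr₁' : r₁ < 1 / 2) (hα : 1 / 2 ≤ α)
    (hr₂ : 0 < r₂) (hsum : r₁ + r₂ ≤ 1 / 2) :
    minerValue 2 (1 / 2) α ![r₁, r₂] 1 = r₂ * (α - r₁) / α ^ 2 ∧
    minerValue 2 (1 / 2) α ![r₁, r₂] 1 / r₂ = (α - r₁) / α ^ 2 ∧
    oceanicValue 1 (1 / 2) α (fun _ => r₁) = (α - r₁) / α ∧
    minerValue 2 (1 / 2) α ![r₁, r₂] 1 / r₂ = oceanicValue 1 (1 / 2) α (fun _ => r₁) / α :=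
  stmt_11_general α r₁ r₂ hr₁ hα hr₂ hsum
end
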